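/- arXiv:0909.2214 — 2 statements merged into one kernel-verified Lean document; each statement's English description precedes it below -/
import Mathlib

section
/- Let R_ρ(w) = 2wρ/(√(1+4ρ²w²)+1) for ρ > 0 (R-transform of the symmetric Bernoulli measure λ_ρ = (δ_{-ρ}+δ_ρ)/2, with the principal branch). Then R_ρ maps the lower half plane ℂ⁻ into ℂ⁻ ∪ ℝ; in particular Im R_ρ(w) ≤ 0 whenever Im w < 0. -/
open Complex

/-!
Put `z = 2ρw` and `s = √(1 + z²)`, so that `R_ρ(w) = z / (s + 1)` with `s² = 1 + z²` and
`Re s ≥ 0`. Writing `z = x + iy`, `s = a + ib`, the sign of `Im R_ρ(w)` is that of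
`y(a + 1) - xb`. Comparing real and imaginary parts of `s² = 1 + z²` gives
`(a² - x²)(a² + y²) = a²`, hence `x² ≤ a²` as soon as `y ≠ 0`; multiplying by `a` and using
`ab = xy` then gives `a(y(a + 1) - xb) = y(a² + a - x²) ≤ 0` for `y < 0`.
-/

namespace Complex

lemma re_sq_sub_im_sq_and_re_mul_im_of_sq_eq_one_add_sq {s z : ℂ} (hs : s ^ 2 = 1 + z ^ 2) :
    s.re ^ 2 - s.im ^ 2 = 1 + z.re ^ 2 - z.im ^ 2 ∧ s.re * s.im = z.re * z.im := by
  have hre := congrArg re hs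
  have him := congrArg im hs
  simp only [sq, mul_re, mul_im, add_re, add_im, one_re, one_im] at hre him
  constructor <;> linarith

lemma re_sq_le_re_sq_of_sq_eq_one_add_sq {s z : ℂ} (hs : s ^ 2 = 1 + z ^ 2) (hz : z.im ≠ 0) :
    z.re ^ 2 ≤ s.re ^ 2 := by
  obtain ⟨hsq, hprod⟩ := re_sq_sub_im_sq_and_re_mul_im_of_sq_eq_one_add_sq hs
  have hidentity : (s.re ^ 2 - z.re ^ 2) * (s.re ^ 2 + z.im ^ 2) = s.re ^ 2 := by
    linear_combination s.re ^ 2 * hsq + (z.re * z.im + s.re * s.im) * hprod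
  have hpos : 0 < s.re ^ 2 + z.im ^ 2 := by positivity
  exact sub_nonneg.mp (nonneg_of_mul_nonneg_left (hidentity.symm ▸ sq_nonneg s.re) hpos)

lemma im_div_add_one_nonpos_of_sq_eq_one_add_sq {s z : ℂ} (hs : s ^ 2 = 1 + z ^ 2)
    (hs_re : 0 ≤ s.re) (hz : z.im < 0) : (z / (s + 1)).im ≤ 0 := by
  obtain ⟨-, hprod⟩ := re_sq_sub_im_sq_and_re_mul_im_of_sq_eq_one_add_sq hs
  have hx := re_sq_le_re_sq_of_sq_eq_one_add_sq hs hz.ne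
  have hnum : z.im * (s.re + 1) - z.re * s.im ≤ 0 := by
    rcases hs_re.eq_or_lt with hre | hre
    · have hx0 : z.re = 0 := by
        rw [← hre, zero_pow two_ne_zero] at hx
        exact pow_eq_zero_iff two_ne_zero |>.mp (le_antisymm hx (sq_nonneg _))
      rw [hx0, ← hre]
      linarith
    · refine nonpos_of_mul_nonpos_right ?_ hre
      calc s.re * (z.im * (s.re + 1) - z.re * s.im)
          = z.im * (s.re ^ 2 + s.re - z.re ^ 2) := by linear_combination (-z.re) * hprod
        _ ≤ 0 := mul_nonpos_of_nonpos_of_nonneg hz.le (by nlinarith)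
  rw [div_im, div_sub_div_same]
  simpa using div_nonpos_of_nonpos_of_nonneg hnum (normSq_nonneg (s + 1))

end Complex

/-- The R-transform `R_ρ(w) = 2wρ/(√(1+4ρ²w²)+1)` of the symmetric Bernoulli
measure `(δ_{-ρ}+δ_ρ)/2`, taken with the principal branch of the square root,
maps the lower half plane into `ℂ⁻ ∪ ℝ`: `Im R_ρ(w) ≤ 0` whenever `Im w < 0`. -/
theorem stmt_7 (ρ : ℝ) (hρ : 0 < ρ) (w : ℂ) (hw : w.im < 0) :
    (2 * w * ρ / ((1 + 4 * (ρ : ℂ) ^ 2 * w ^ 2) ^ ((1 : ℂ) / 2) + 1)).im ≤ 0 := by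
  set z : ℂ := 2 * ρ * w with hz_def
  have hz : z.im < 0 := by
    simpa [hz_def] using mul_neg_of_pos_of_neg (mul_pos two_pos hρ) hw
  rw [show 2 * w * (ρ : ℂ) = z by ring, show 1 + 4 * (ρ : ℂ) ^ 2 * w ^ 2 = 1 + z ^ 2 by ring,
    one_div]
  refine im_div_add_one_nonpos_of_sq_eq_one_add_sq (cpow_ofNat_inv_pow _ 2) ?_ hz
  exact cpow_inv_two_re _ ▸ Real.sqrt_nonneg _
end

section
/- Let ν be a probability measure on ℝ whose Stieltjes transform satisfies |Im G_ν(iy)| ≤ c for all y ∈ (0,1]. Then for every ε ∈ (0, 1], ∫_{(-ε,ε)} |log|x|| dν(x) ≤ C·ε·(1 + |log ε|) for a constant C depending only on c. In particular ν({0}) = 0 and x ↦ log|x| is ν-integrable near 0. -/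
/-!
Since `Im (iy - x)⁻¹ = -y / (x² + y²)` and the Poisson kernel `y / (x² + y²)` is at least
`1 / (2y)` on `(-y, y)`, the hypothesis gives `ν (-y, y) ≤ 2cy` for `y ∈ (0, 1]`. By the layer
cake formula, `∫_{(-ε,ε)} |log|x|| dν = ∫_0^∞ ν {|x| < ε, |log|x|| > t} dt`; the integrand is at
most `2cε` for `t ≤ |log ε|` and at most `2c e^{-t}` beyond, which integrates to
`2cε (1 + |log ε|)`.
-/

open MeasureTheory Set Complex Filter Topology

lemma im_inv_I_mul_sub (x y : ℝ) : ((I * y - x)⁻¹ : ℂ).im = -(y / (x ^ 2 + y ^ 2)) := by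
  simp [inv_im, normSq_apply]
  ring

lemma norm_inv_I_mul_sub_le (x : ℝ) {y : ℝ} (hy : 0 < y) : ‖(I * y - x)⁻¹‖ ≤ y⁻¹ := by
  rw [norm_inv]
  refine inv_anti₀ hy ?_
  simpa [abs_of_pos hy] using abs_im_le_norm (I * y - x)

section StieltjesTransform

variable {ν : Measure ℝ} [IsFiniteMeasure ν] {y : ℝ}

lemma integrable_inv_I_mul_sub (hy : 0 < y) : Integrable (fun x : ℝ => (I * y - x)⁻¹) ν := by
  refine .of_bound (Continuous.aestronglyMeasurable ?_) y⁻¹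
    (.of_forall (norm_inv_I_mul_sub_le · hy))
  refine Continuous.inv₀ (by fun_prop) fun x h => hy.ne' ?_
  simpa using congrArg im h

lemma integral_div_sq_add_sq_eq_neg_im (hy : 0 < y) :
    ∫ x, y / (x ^ 2 + y ^ 2) ∂ν = -(∫ x : ℝ, (I * y - x)⁻¹ ∂ν).im := by
  rw [← RCLike.im_to_complex, ← integral_im (integrable_inv_I_mul_sub hy), ← integral_neg]
  simp only [RCLike.im_to_complex, im_inv_I_mul_sub, neg_neg]

lemma measureReal_Ioo_le_integral_div_sq_add_sq (hy : 0 < y) :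
    ν.real (Ioo (-y) y) ≤ 2 * y * ∫ x, y / (x ^ 2 + y ^ 2) ∂ν := by
  have hint : Integrable (fun x : ℝ => 2 * y * (y / (x ^ 2 + y ^ 2))) ν := by
    refine .of_bound (by fun_prop : Measurable _).aestronglyMeasurable 2 (.of_forall fun x => ?_)
    rw [Real.norm_of_nonneg (by positivity), mul_div_assoc', div_le_iff₀ (by positivity)]
    nlinarith [sq_nonneg x]
  calc ν.real (Ioo (-y) y) = ∫ _ in Ioo (-y) y, (1 : ℝ) ∂ν := by simp
    _ ≤ ∫ x in Ioo (-y) y, 2 * y * (y / (x ^ 2 + y ^ 2)) ∂ν := by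
      refine setIntegral_mono_on (by simp) hint.integrableOn measurableSet_Ioo fun x hx => ?_
      rw [mul_div_assoc', le_div_iff₀ (by positivity)]
      nlinarith [mul_pos (sub_pos.2 hx.2) (neg_lt_iff_pos_add.1 hx.1)]
    _ ≤ ∫ x, 2 * y * (y / (x ^ 2 + y ^ 2)) ∂ν :=
      setIntegral_le_integral hint (.of_forall fun x => by positivity)
    _ = 2 * y * ∫ x, y / (x ^ 2 + y ^ 2) ∂ν := integral_const_mul _ _

lemma measure_Ioo_le_of_abs_im_integral_inv_le {c : ℝ} (hy : 0 < y)
    (hG : |(∫ x : ℝ, (I * y - x)⁻¹ ∂ν).im| ≤ c) :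
    ν (Ioo (-y) y) ≤ ENNReal.ofReal (2 * c * y) := by
  rw [← ofReal_measureReal]
  refine ENNReal.ofReal_le_ofReal ((measureReal_Ioo_le_integral_div_sq_add_sq hy).trans ?_)
  rw [integral_div_sq_add_sq_eq_neg_im hy]
  nlinarith [(neg_le_abs (∫ x : ℝ, (I * y - x)⁻¹ ∂ν).im).trans hG]

end StieltjesTransform

lemma abs_lt_exp_neg_of_lt_abs_log {x t : ℝ} (ht : 0 ≤ t) (hx : |x| ≤ 1)
    (h : t < |Real.log (abs x)|) : |x| < Real.exp (-t) := by
  have hx0 : 0 < |x| := by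
    refine abs_pos.2 fun hx0 => ?_
    simp [hx0] at h
    linarith
  rw [abs_of_nonpos (Real.log_nonpos hx0.le hx)] at h
  rw [← Real.log_lt_iff_lt_exp hx0]
  linarith

lemma setLIntegral_ofReal_mul_exp_neg_Ioi {K : ℝ} (hK : 0 ≤ K) (a : ℝ) :
    ∫⁻ t in Ioi a, ENNReal.ofReal (K * Real.exp (-t)) = ENNReal.ofReal (K * Real.exp (-a)) := by
  rw [← ofReal_integral_eq_lintegral_ofReal ((integrableOn_exp_neg_Ioi a).const_mul K)
    (.of_forall fun t => by positivity), integral_const_mul, integral_exp_neg_Ioi]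

section SmallBalls

variable {ν : Measure ℝ} {K : ℝ}

lemma measure_singleton_zero_eq_zero_of_measure_Ioo_le
    (hball : ∀ y, 0 < y → y ≤ 1 → ν (Ioo (-y) y) ≤ ENNReal.ofReal (K * y)) : ν {0} = 0 := by
  have hlim : Tendsto (fun y => ENNReal.ofReal (K * y)) (𝓝[>] 0) (𝓝 0) := by
    simpa using (ENNReal.tendsto_ofReal ((continuous_const_mul K).tendsto 0)).mono_left
      nhdsWithin_le_nhds
  refine le_antisymm (ge_of_tendsto hlim ?_) bot_le
  filter_upwards [Ioc_mem_nhdsGT one_pos] with y hy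
  exact (measure_mono (singleton_subset_iff.2 (by simpa using hy.1))).trans (hball y hy.1 hy.2)

lemma setLIntegral_abs_log_abs_le_of_measure_Ioo_le
    (hball : ∀ y, 0 < y → y ≤ 1 → ν (Ioo (-y) y) ≤ ENNReal.ofReal (K * y)) (hK : 0 ≤ K)
    {ε : ℝ} (hε : 0 < ε) (hε1 : ε ≤ 1) :
    ∫⁻ x in Ioo (-ε) ε, ENNReal.ofReal |Real.log (abs x)| ∂ν ≤
      ENNReal.ofReal (K * ε * (1 + |Real.log ε|)) := by
  have hexpL : Real.exp (-|Real.log ε|) = ε := by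
    rw [abs_of_nonpos (Real.log_nonpos hε.le hε1), neg_neg, Real.exp_log hε]
  set L := |Real.log ε|
  have hL : 0 ≤ L := abs_nonneg _
  set level : ℝ → ENNReal := fun t => ν.restrict (Ioo (-ε) ε) {x | t < |Real.log (abs x)|}
  have hlevel_le_ball (t : ℝ) : level t ≤ ENNReal.ofReal (K * ε) := by
    simp only [level, Measure.restrict_apply' measurableSet_Ioo]
    exact (measure_mono inter_subset_right).trans (hball ε hε hε1)
  have hlevel_le_exp (t : ℝ) (ht : 0 ≤ t) : level t ≤ ENNReal.ofReal (K * Real.exp (-t)) := by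
    simp only [level, Measure.restrict_apply' measurableSet_Ioo]
    refine (measure_mono fun x hx => abs_lt.1 ?_).trans
      (hball _ (Real.exp_pos _) (Real.exp_le_one_iff.2 (neg_nonpos.2 ht)))
    exact abs_lt_exp_neg_of_lt_abs_log ht ((abs_lt.2 hx.2).le.trans hε1) hx.1
  calc ∫⁻ x in Ioo (-ε) ε, ENNReal.ofReal |Real.log (abs x)| ∂ν
      = ∫⁻ t in Ioi 0, level t :=
        lintegral_eq_lintegral_meas_lt _ (.of_forall fun _ => abs_nonneg _) (by fun_prop)
    _ = (∫⁻ t in Ioc 0 L, level t) + ∫⁻ t in Ioi L, level t := by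
        rw [← Ioc_union_Ioi_eq_Ioi hL,
          lintegral_union measurableSet_Ioi (Ioc_disjoint_Ioi le_rfl)]
    _ ≤ (∫⁻ _ in Ioc 0 L, ENNReal.ofReal (K * ε)) +
          ∫⁻ t in Ioi L, ENNReal.ofReal (K * Real.exp (-t)) :=
        add_le_add (setLIntegral_mono' measurableSet_Ioc fun t _ => hlevel_le_ball t)
          (setLIntegral_mono' measurableSet_Ioi fun t ht => hlevel_le_exp t (hL.trans ht.le))
    _ = ENNReal.ofReal (K * ε * (1 + L)) := by
        rw [setLIntegral_const, Real.volume_Ioc, sub_zero,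
          setLIntegral_ofReal_mul_exp_neg_Ioi hK, hexpL, ← ENNReal.ofReal_mul (by positivity),
          ← ENNReal.ofReal_add (by positivity) (by positivity)]
        ring_nf

end SmallBalls

/-- If the Stieltjes transform of a probability measure `ν` on `ℝ` satisfies
`|Im G_ν(iy)| ≤ c` for all `y ∈ (0,1]`, then for every `ε ∈ (0,1]`,
`∫_{(-ε,ε)} |log|x|| dν ≤ C·ε·(1+|log ε|)` for a constant `C` depending only
on `c`; in particular `ν({0}) = 0` and `log|x|` is `ν`-integrable near `0`. -/
theorem stmt_10 (c : ℝ) (hc : 0 ≤ c) :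
    ∃ C > (0 : ℝ), ∀ (ν : Measure ℝ), IsProbabilityMeasure ν →
      (∀ y : ℝ, 0 < y → y ≤ 1 →
        abs (∫ x : ℝ, (Complex.I * y - x)⁻¹ ∂ν).im ≤ c) →
      (∀ ε : ℝ, 0 < ε → ε ≤ 1 →
        ∫ x in Set.Ioo (-ε) ε, abs (Real.log (abs x)) ∂ν ≤ C * ε * (1 + |Real.log ε|)) ∧
      ν {0} = 0 ∧
      IntegrableOn (fun x => Real.log (abs x)) (Set.Ioo (-1) 1) ν := by
  refine ⟨2 * c + 1, by linarith, fun ν _ hG => ?_⟩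
  have hball : ∀ y, 0 < y → y ≤ 1 → ν (Ioo (-y) y) ≤ ENNReal.ofReal (2 * c * y) :=
    fun y hy hy1 => measure_Ioo_le_of_abs_im_integral_inv_le hy (hG y hy hy1)
  have hlog {ε : ℝ} (hε : 0 < ε) (hε1 : ε ≤ 1) :=
    setLIntegral_abs_log_abs_le_of_measure_Ioo_le hball (by linarith) hε hε1
  have hmeas : Measurable fun x : ℝ => Real.log |x| := by fun_prop
  refine ⟨fun ε hε hε1 => ?_, measure_singleton_zero_eq_zero_of_measure_Ioo_le hball, ?_⟩
  · rw [integral_eq_lintegral_of_nonneg_ae (.of_forall fun _ => abs_nonneg _)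
      hmeas.abs.aestronglyMeasurable]
    calc _ ≤ 2 * c * ε * (1 + |Real.log ε|) :=
          ENNReal.toReal_le_of_le_ofReal (by positivity) (hlog hε hε1)
      _ ≤ (2 * c + 1) * ε * (1 + |Real.log ε|) := by gcongr; linarith
  · refine ⟨hmeas.aestronglyMeasurable, ?_⟩
    rw [hasFiniteIntegral_iff_norm]
    simpa only [Real.norm_eq_abs] using (hlog one_pos le_rfl).trans_lt ENNReal.ofReal_lt_top
end
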